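/- Let r ≥ 0 be a natural number, f : [0,1] → ℝ be r-times continuously differentiable, n ≥ 1 a natural number, and 0 < q < p ≤ 1. Then for every x ∈ [0,1]: |B^{[r]}_{n,p,q}(f; x) − f(x)| ≤ (1/r!) · ω(f^{(r)}; [n]_{p,q}^{−1/2}) · ( [n]_{p,q}^{1/2} · B_{n,p,q}(|t−x|^{r+1}; x) + B_{n,p,q}(|t−x|^{r}; x) ). -/

import Mathlib

/-!
The basis functions `P_{n,k}(p,q;x)` are nonnegative on `[0,1]` and, by the `(p,q)`-Pascal
recurrence, sum to `p^{n(n-1)/2}`; hence `|B^{[r]}_{n,p,q}(f;x) - f(x)|` is at most the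
`P_{n,k}`-weighted average of the Taylor remainders `|f(x) - T_r f(x_{n,k}; x)|`. By the Lagrange
form, such a remainder is `(f^{(r)}(ξ) - f^{(r)}(x_{n,k})) (x - x_{n,k})^r / r!` with `ξ` between
`x_{n,k}` and `x`, and splitting `[x_{n,k}, ξ]` into `⌈|ξ - x_{n,k}| / δ⌉` steps of length at
most `δ` gives `|f^{(r)}(ξ) - f^{(r)}(x_{n,k})| ≤ (1 + |x - x_{n,k}| / δ) ω(f^{(r)}; δ)`. Taking
`δ = [n]_{p,q}^{-1/2}` produces the two absolute moments.
-/

open Finset Set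

/-- The `(p,q)`-integer `[k]_{p,q} = (p^k - q^k)/(p - q)` (so `[0]_{p,q} = 0`). -/
noncomputable def pqInt (p q : ℝ) (k : ℕ) : ℝ := (p ^ k - q ^ k) / (p - q)

/-- The `(p,q)`-factorial `[k]_{p,q}! = ∏_{j=1}^k [j]_{p,q}` (`[0]_{p,q}! = 1`). -/
noncomputable def pqFact (p q : ℝ) (k : ℕ) : ℝ := ∏ j ∈ Finset.range k, pqInt p q (j + 1)

/-- The `(p,q)`-binomial coefficient. -/
noncomputable def pqBinom (p q : ℝ) (n k : ℕ) : ℝ :=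
  pqFact p q n / (pqFact p q k * pqFact p q (n - k))

/-- The `(p,q)`-Bernstein basis function
`P_{n,k}(p,q;x) = p^{k(k-1)/2} [n choose k]_{p,q} x^k ∏_{s=0}^{n-k-1} (p^s - q^s x)`. -/
noncomputable def pqBern (p q : ℝ) (n k : ℕ) (x : ℝ) : ℝ :=
  p ^ (k * (k - 1) / 2) * pqBinom p q n k * x ^ k *
    ∏ s ∈ Finset.range (n - k), (p ^ s - q ^ s * x)

/-- The node `x_{n,k} = p^{n-k} [k]_{p,q} / [n]_{p,q}`. -/
noncomputable def pqNode (p q : ℝ) (n k : ℕ) : ℝ := p ^ (n - k) * pqInt p q k / pqInt p q n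

/-- The `(p,q)`-power central moment
`B_{n,p,q}((t-a)^m_{p,q}; y) = p^{-n(n-1)/2} ∑_{k=0}^n (∏_{s=0}^{m-1}(p^s x_{n,k} - q^s a)) P_{n,k}(p,q;y)`. -/
noncomputable def pqPowMoment (p q : ℝ) (n m : ℕ) (a y : ℝ) : ℝ :=
  (p ^ (n * (n - 1) / 2))⁻¹ *
    ∑ k ∈ Finset.range (n + 1),
      (∏ s ∈ Finset.range m, (p ^ s * pqNode p q n k - q ^ s * a)) * pqBern p q n k y

/-- The `m`-th absolute central moment
`B_{n,p,q}(|t-x|^m; x) = p^{-n(n-1)/2} ∑_{k=0}^n |x_{n,k} - x|^m P_{n,k}(p,q;x)`. -/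
noncomputable def pqAbsMoment (p q : ℝ) (n m : ℕ) (x : ℝ) : ℝ :=
  (p ^ (n * (n - 1) / 2))⁻¹ *
    ∑ k ∈ Finset.range (n + 1), |pqNode p q n k - x| ^ m * pqBern p q n k x

/-- The ordinary `m`-th central moment
`B_{n,p,q}((t-x)^m; x) = p^{-n(n-1)/2} ∑_{k=0}^n (x_{n,k} - x)^m P_{n,k}(p,q;x)`. -/
noncomputable def pqMoment (p q : ℝ) (n m : ℕ) (x : ℝ) : ℝ :=
  (p ^ (n * (n - 1) / 2))⁻¹ *
    ∑ k ∈ Finset.range (n + 1), (pqNode p q n k - x) ^ m * pqBern p q n k x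

/-- The `(p,q)`-Bernstein operator `B_{n,p,q}(f;x)`. -/
noncomputable def pqBernstein (p q : ℝ) (n : ℕ) (f : ℝ → ℝ) (x : ℝ) : ℝ :=
  (p ^ (n * (n - 1) / 2))⁻¹ *
    ∑ k ∈ Finset.range (n + 1), f (pqNode p q n k) * pqBern p q n k x

/-- The `r`-th order generalization `B^{[r]}_{n,p,q}(f;x)` where `f^{(i)}` is interpreted as
`iteratedDerivWithin i f (Set.Icc 0 1)`. -/
noncomputable def pqBernsteinR (p q : ℝ) (n r : ℕ) (f : ℝ → ℝ) (x : ℝ) : ℝ :=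
  (p ^ (n * (n - 1) / 2))⁻¹ *
    ∑ k ∈ Finset.range (n + 1), pqBern p q n k x *
      ∑ i ∈ Finset.range (r + 1),
        iteratedDerivWithin i f (Set.Icc 0 1) (pqNode p q n k) / (i.factorial : ℝ) *
          (x - pqNode p q n k) ^ i

/-- The modulus of continuity on `[0,1]`:
`ω(g; δ) = sup { |g u - g v| : u, v ∈ [0,1], |u - v| ≤ δ }`. -/
noncomputable def modulusOfContinuity (g : ℝ → ℝ) (δ : ℝ) : ℝ :=
  sSup {d : ℝ | ∃ u ∈ Set.Icc (0 : ℝ) 1, ∃ v ∈ Set.Icc (0 : ℝ) 1, |u - v| ≤ δ ∧ d = |g u - g v|}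

section PQ

variable {p q : ℝ}

lemma pqInt_pos (hq : 0 ≤ q) (hqp : q < p) {k : ℕ} (hk : 1 ≤ k) : 0 < pqInt p q k :=
  div_pos (sub_pos.2 (pow_lt_pow_left₀ hqp hq (by omega))) (sub_pos.2 hqp)

lemma pqInt_nonneg (hq : 0 ≤ q) (hqp : q < p) (k : ℕ) : 0 ≤ pqInt p q k := by
  rcases Nat.eq_zero_or_pos k with rfl | hk
  · simp [pqInt]
  · exact (pqInt_pos hq hqp hk).le

lemma pqInt_add (hpq : p ≠ q) (j m : ℕ) :
    pqInt p q (j + m) = p ^ j * pqInt p q m + q ^ m * pqInt p q j := by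
  have : p - q ≠ 0 := sub_ne_zero.2 hpq
  simp only [pqInt, pow_add]
  field_simp
  ring

lemma pqFact_pos (hq : 0 ≤ q) (hqp : q < p) (k : ℕ) : 0 < pqFact p q k :=
  Finset.prod_pos fun _ _ => pqInt_pos hq hqp (by omega)

lemma pqFact_succ (k : ℕ) : pqFact p q (k + 1) = pqFact p q k * pqInt p q (k + 1) :=
  Finset.prod_range_succ _ _

lemma pqFact_zero : pqFact p q 0 = 1 := Finset.prod_range_zero _

lemma pqBinom_pos (hq : 0 ≤ q) (hqp : q < p) (n k : ℕ) : 0 < pqBinom p q n k :=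
  div_pos (pqFact_pos hq hqp n) (mul_pos (pqFact_pos hq hqp k) (pqFact_pos hq hqp _))

lemma pqBinom_zero_right (hq : 0 ≤ q) (hqp : q < p) (n : ℕ) : pqBinom p q n 0 = 1 := by
  rw [pqBinom, pqFact_zero, one_mul, Nat.sub_zero, div_self (pqFact_pos hq hqp n).ne']

lemma pqBinom_self (hq : 0 ≤ q) (hqp : q < p) (n : ℕ) : pqBinom p q n n = 1 := by
  rw [pqBinom, Nat.sub_self, pqFact_zero, mul_one, div_self (pqFact_pos hq hqp n).ne']

lemma pqBinom_succ_succ (hq : 0 ≤ q) (hqp : q < p) {n j : ℕ} (hj : j < n) :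
    pqBinom p q (n + 1) (j + 1) =
      p ^ (j + 1) * pqBinom p q n (j + 1) + q ^ (n - j) * pqBinom p q n j := by
  have hsplit : pqInt p q (n + 1) =
      p ^ (j + 1) * pqInt p q (n - j) + q ^ (n - j) * pqInt p q (j + 1) := by
    rw [← pqInt_add hqp.ne', show j + 1 + (n - j) = n + 1 by omega]
  have hfact : pqFact p q (n - j) = pqFact p q (n - (j + 1)) * pqInt p q (n - j) := by
    have := pqFact_succ (p := p) (q := q) (n - (j + 1))
    rwa [show n - (j + 1) + 1 = n - j by omega] at this
  have := pqFact_pos hq hqp j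
  have := pqFact_pos hq hqp (n - (j + 1))
  have := pqInt_pos hq hqp (k := j + 1) (by omega)
  have := pqInt_pos hq hqp (k := n - j) (by omega)
  simp only [pqBinom, Nat.add_sub_add_right, pqFact_succ, hfact, hsplit]
  field_simp

lemma pqBern_succ_succ (hq : 0 ≤ q) (hqp : q < p) {n j : ℕ} (hj : j < n) (x : ℝ) :
    pqBern p q (n + 1) (j + 1) x =
      p ^ (j + 1) * (p ^ (n - (j + 1)) - q ^ (n - (j + 1)) * x) * pqBern p q n (j + 1) x +
        p ^ j * q ^ (n - j) * x * pqBern p q n j x := by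
  have hprod : ∏ s ∈ Finset.range (n - j), (p ^ s - q ^ s * x) =
      (∏ s ∈ Finset.range (n - (j + 1)), (p ^ s - q ^ s * x)) *
        (p ^ (n - (j + 1)) - q ^ (n - (j + 1)) * x) := by
    rw [← Finset.prod_range_succ, show n - (j + 1) + 1 = n - j by omega]
  simp only [pqBern, pqBinom_succ_succ hq hqp hj, Nat.triangle_succ, pow_add,
    Nat.add_sub_add_right, hprod]
  ring

lemma pqBern_succ_zero (hq : 0 ≤ q) (hqp : q < p) (n : ℕ) (x : ℝ) :
    pqBern p q (n + 1) 0 x = (p ^ n - q ^ n * x) * pqBern p q n 0 x := by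
  simp [pqBern, pqBinom_zero_right hq hqp, Finset.prod_range_succ, mul_comm]

lemma pqBern_succ_self (hq : 0 ≤ q) (hqp : q < p) (n : ℕ) (x : ℝ) :
    pqBern p q (n + 1) (n + 1) x = p ^ n * x * pqBern p q n n x := by
  simp only [pqBern, pqBinom_self hq hqp, Nat.triangle_succ, Nat.sub_self, pow_add]
  ring

lemma sum_pqBern (hq : 0 ≤ q) (hqp : q < p) (n : ℕ) (x : ℝ) :
    ∑ k ∈ Finset.range (n + 1), pqBern p q n k x = p ^ (n * (n - 1) / 2) := by
  induction n with
  | zero => simp [pqBern, pqBinom, pqFact]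
  | succ n ih =>
    set a : ℕ → ℝ := fun k => p ^ k * (p ^ (n - k) - q ^ (n - k) * x) * pqBern p q n k x
    set b : ℕ → ℝ := fun k => p ^ k * q ^ (n - k) * x * pqBern p q n k x
    have hab : ∀ k ∈ Finset.range (n + 1), a k + b k = p ^ n * pqBern p q n k x := by
      intro k hk
      rw [← pow_mul_pow_sub p (Nat.lt_succ_iff.1 (Finset.mem_range.1 hk))]
      ring
    calc ∑ k ∈ Finset.range (n + 1 + 1), pqBern p q (n + 1) k x
        = ∑ k ∈ Finset.range (n + 1), a k + ∑ k ∈ Finset.range (n + 1), b k := by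
          rw [Finset.sum_range_succ, Finset.sum_range_succ', Finset.sum_range_succ',
            Finset.sum_range_succ _ n, Finset.sum_congr rfl fun j hj =>
              pqBern_succ_succ hq hqp (Finset.mem_range.1 hj) x,
            Finset.sum_add_distrib, pqBern_succ_zero hq hqp, pqBern_succ_self hq hqp]
          simp only [a, b, pow_zero, one_mul, Nat.sub_zero, Nat.sub_self]
          ring
      _ = p ^ n * ∑ k ∈ Finset.range (n + 1), pqBern p q n k x := by
          rw [← Finset.sum_add_distrib, Finset.sum_congr rfl hab, Finset.mul_sum]
      _ = p ^ ((n + 1) * (n + 1 - 1) / 2) := by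
          rw [ih, Nat.triangle_succ, pow_add, mul_comm]

lemma pqNode_mem_Icc (hq : 0 ≤ q) (hqp : q < p) {n k : ℕ} (hn : 1 ≤ n) (hk : k ≤ n) :
    pqNode p q n k ∈ Set.Icc (0 : ℝ) 1 := by
  have hpq : 0 < p - q := sub_pos.2 hqp
  have hn0 := pqInt_pos hq hqp hn
  refine ⟨div_nonneg (mul_nonneg (pow_nonneg (hq.trans hqp.le) _) (pqInt_nonneg hq hqp k))
    hn0.le, ?_⟩
  rw [pqNode, div_le_one hn0, pqInt, pqInt, ← mul_div_assoc, div_le_div_iff_of_pos_right hpq,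
    mul_sub, ← pow_add, Nat.sub_add_cancel hk]
  have : q ^ (n - k) * q ^ k ≤ p ^ (n - k) * q ^ k := by gcongr
  rw [← pow_add, Nat.sub_add_cancel hk] at this
  linarith

lemma pqBern_nonneg (hq : 0 ≤ q) (hqp : q < p) (n k : ℕ) {x : ℝ} (hx : x ∈ Set.Icc (0 : ℝ) 1) :
    0 ≤ pqBern p q n k x := by
  have hp := hq.trans_lt hqp
  refine mul_nonneg (mul_nonneg (mul_nonneg (by positivity) (pqBinom_pos hq hqp n k).le)
    (pow_nonneg hx.1 k)) (Finset.prod_nonneg fun s _ => ?_)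
  have : q ^ s * x ≤ p ^ s := calc
    q ^ s * x ≤ q ^ s := mul_le_of_le_one_right (by positivity) hx.2
    _ ≤ p ^ s := by gcongr
  linarith

end PQ

section ModulusOfContinuity

variable {g : ℝ → ℝ} {C : ℝ} (hC : ∀ u ∈ Set.Icc (0 : ℝ) 1, |g u| ≤ C)
include hC

lemma abs_sub_le_modulusOfContinuity {u v δ : ℝ} (hu : u ∈ Set.Icc (0 : ℝ) 1)
    (hv : v ∈ Set.Icc (0 : ℝ) 1) (huv : |u - v| ≤ δ) : |g u - g v| ≤ modulusOfContinuity g δ := by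
  refine le_csSup ⟨C + C, ?_⟩ ⟨u, hu, v, hv, huv, rfl⟩
  rintro d ⟨u, hu, v, hv, -, rfl⟩
  exact (abs_sub _ _).trans (add_le_add (hC u hu) (hC v hv))

lemma modulusOfContinuity_nonneg {δ : ℝ} (hδ : 0 ≤ δ) : 0 ≤ modulusOfContinuity g δ := by
  simpa using abs_sub_le_modulusOfContinuity hC (u := 0) (v := 0) (by simp) (by simp)
    (by simpa using hδ)

lemma abs_sub_le_natCast_mul_modulusOfContinuity {u v δ : ℝ} (m : ℕ)
    (hu : u ∈ Set.Icc (0 : ℝ) 1) (hv : v ∈ Set.Icc (0 : ℝ) 1) (huv : |u - v| ≤ m * δ) :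
    |g u - g v| ≤ m * modulusOfContinuity g δ := by
  rcases Nat.eq_zero_or_pos m with rfl | hm
  · obtain rfl : u = v := by simpa [sub_eq_zero] using huv
    simp
  have hm' : (0 : ℝ) < m := by exact_mod_cast hm
  set t : ℕ → ℝ := fun j => u + ((j : ℝ) / m) • (v - u)
  have ht : ∀ j ≤ m, t j ∈ Set.Icc (0 : ℝ) 1 := fun j hj =>
    (convex_Icc 0 1).add_smul_sub_mem hu hv
      ⟨by positivity, div_le_one_of_le₀ (by exact_mod_cast hj) hm'.le⟩
  have hstep : ∀ j ∈ Finset.range m, |g (t j) - g (t (j + 1))| ≤ modulusOfContinuity g δ := by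
    intro j hj
    have hj := Finset.mem_range.1 hj
    refine abs_sub_le_modulusOfContinuity hC (ht j hj.le) (ht (j + 1) hj) ?_
    have : t j - t (j + 1) = (u - v) / m := by
      simp only [t, smul_eq_mul]
      push_cast
      field_simp
      ring
    rw [this, abs_div, Nat.abs_cast, div_le_iff₀ hm', mul_comm]
    exact huv
  calc |g u - g v| = |∑ j ∈ Finset.range m, (g (t j) - g (t (j + 1)))| := by
        rw [Finset.sum_range_sub']
        simp [t, hm'.ne']
    _ ≤ ∑ j ∈ Finset.range m, |g (t j) - g (t (j + 1))| := Finset.abs_sum_le_sum_abs _ _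
    _ ≤ m * modulusOfContinuity g δ := by
        simpa using Finset.sum_le_sum hstep

lemma abs_sub_le_one_add_div_mul_modulusOfContinuity {u v δ : ℝ} (hδ : 0 < δ)
    (hu : u ∈ Set.Icc (0 : ℝ) 1) (hv : v ∈ Set.Icc (0 : ℝ) 1) :
    |g u - g v| ≤ (1 + |u - v| / δ) * modulusOfContinuity g δ := by
  have hratio : 0 ≤ |u - v| / δ := by positivity
  calc |g u - g v| ≤ ⌈|u - v| / δ⌉₊ * modulusOfContinuity g δ :=
        abs_sub_le_natCast_mul_modulusOfContinuity hC _ hu hv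
          ((div_le_iff₀ hδ).1 (Nat.le_ceil _))
    _ ≤ (1 + |u - v| / δ) * modulusOfContinuity g δ := by
        gcongr
        · exact modulusOfContinuity_nonneg hC hδ.le
        · linarith [Nat.ceil_lt_add_one hratio]

end ModulusOfContinuity

lemma iteratedDerivWithin_of_subset {𝕜 F : Type*} [NontriviallyNormedField 𝕜]
    [NormedAddCommGroup F] [NormedSpace 𝕜 F] {f : 𝕜 → F} {s t : Set 𝕜} {n : ℕ} {x : 𝕜}
    (hst : s ⊆ t) (hs : UniqueDiffOn 𝕜 s) (ht : UniqueDiffOn 𝕜 t) (hf : ContDiffOn 𝕜 n f t)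
    (hx : x ∈ s) : iteratedDerivWithin n f s x = iteratedDerivWithin n f t x := by
  simp only [iteratedDerivWithin_eq_iteratedFDerivWithin,
    iteratedFDerivWithin_subset hst hs ht hf hx]

lemma exists_sub_taylorWithinEval_eq {f : ℝ → ℝ} {s : Set ℝ} {r : ℕ} {a x : ℝ}
    (hs : UniqueDiffOn ℝ s) (hf : ContDiffOn ℝ r f s) (hax : Set.uIcc a x ⊆ s) :
    ∃ ξ ∈ Set.uIcc a x, f x - taylorWithinEval f r s a x =
      (iteratedDerivWithin r f s ξ - iteratedDerivWithin r f s a) * (x - a) ^ r /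
        r.factorial := by
  rcases r with _ | m
  · exact ⟨x, Set.right_mem_uIcc, by simp [taylor_within_zero_eval]⟩
  rcases eq_or_ne a x with rfl | hne
  · exact ⟨a, Set.left_mem_uIcc, by simp [taylorWithinEval_self]⟩
  have hI : UniqueDiffOn ℝ (Set.uIcc a x) := uniqueDiffOn_Icc (min_lt_max.2 hne)
  have hfI := hf.mono hax
  obtain ⟨ξ, hξ, hrem⟩ := taylor_mean_remainder_lagrange (n := m) hne
    (hfI.of_le (by norm_cast; omega))
    ((hfI.differentiableOn_iteratedDerivWithin (by norm_cast; omega) hI).mono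
      Set.uIoo_subset_uIcc_self)
  have htaylor : taylorWithinEval f m (Set.uIcc a x) a x = taylorWithinEval f m s a x := by
    simp only [taylor_within_apply]
    refine Finset.sum_congr rfl fun i hi => ?_
    have hi : i ≤ m + 1 := (Finset.mem_range_succ_iff.1 hi).trans m.le_succ
    rw [iteratedDerivWithin_of_subset hax hI hs (hf.of_le (by exact_mod_cast hi))
      Set.left_mem_uIcc]
  have hξI := Set.uIoo_subset_uIcc_self hξ
  rw [htaylor, iteratedDerivWithin_of_subset hax hI hs hf hξI] at hrem
  refine ⟨ξ, hξI, ?_⟩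
  rw [taylorWithinEval_succ, smul_eq_mul]
  simp only [Nat.factorial_succ] at hrem ⊢
  push_cast at hrem ⊢
  have := m.factorial_pos
  field_simp at hrem ⊢
  linear_combination hrem

lemma abs_sub_taylorWithinEval_le {f : ℝ → ℝ} {r : ℕ} (hf : ContDiffOn ℝ r f (Set.Icc 0 1))
    {δ : ℝ} (hδ : 0 < δ) {a x : ℝ} (ha : a ∈ Set.Icc (0 : ℝ) 1) (hx : x ∈ Set.Icc (0 : ℝ) 1) :
    |f x - taylorWithinEval f r (Set.Icc 0 1) a x| ≤
      (1 + |x - a| / δ) * modulusOfContinuity (iteratedDerivWithin r f (Set.Icc 0 1)) δ *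
        |x - a| ^ r / r.factorial := by
  have hs : UniqueDiffOn ℝ (Set.Icc (0 : ℝ) 1) := uniqueDiffOn_Icc one_pos
  obtain ⟨C, hC⟩ := isCompact_Icc.exists_bound_of_continuousOn
    (hf.continuousOn_iteratedDerivWithin le_rfl hs)
  obtain ⟨ξ, hξ, hrem⟩ := exists_sub_taylorWithinEval_eq hs hf (Set.uIcc_subset_Icc ha hx)
  have hξa : |ξ - a| ≤ |x - a| := Set.abs_sub_left_of_mem_uIcc hξ
  rw [hrem, abs_div, abs_mul, abs_pow, Nat.abs_cast]
  gcongr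
  calc _ ≤ (1 + |ξ - a| / δ) * modulusOfContinuity (iteratedDerivWithin r f (Set.Icc 0 1)) δ :=
        abs_sub_le_one_add_div_mul_modulusOfContinuity hC hδ (Set.uIcc_subset_Icc ha hx hξ) ha
    _ ≤ _ := by
        gcongr
        exact modulusOfContinuity_nonneg hC hδ.le

lemma pqBernsteinR_eq (p q : ℝ) (n r : ℕ) (f : ℝ → ℝ) (x : ℝ) :
    pqBernsteinR p q n r f x = (p ^ (n * (n - 1) / 2))⁻¹ *
      ∑ k ∈ Finset.range (n + 1),
        pqBern p q n k x * taylorWithinEval f r (Set.Icc 0 1) (pqNode p q n k) x := by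
  simp only [pqBernsteinR, taylor_within_apply, smul_eq_mul]
  refine congrArg _ (Finset.sum_congr rfl fun k _ => congrArg _ ?_)
  exact Finset.sum_congr rfl fun i _ => by ring

lemma abs_pqBernsteinR_sub_le {p q : ℝ} (hq : 0 ≤ q) (hqp : q < p) (n r : ℕ) (f : ℝ → ℝ)
    {x : ℝ} (hx : x ∈ Set.Icc (0 : ℝ) 1) :
    |pqBernsteinR p q n r f x - f x| ≤ (p ^ (n * (n - 1) / 2))⁻¹ *
      ∑ k ∈ Finset.range (n + 1),
        pqBern p q n k x * |f x - taylorWithinEval f r (Set.Icc 0 1) (pqNode p q n k) x| := by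
  have hN : (0 : ℝ) < p ^ (n * (n - 1) / 2) := pow_pos (hq.trans_lt hqp) _
  have hfx : f x = (p ^ (n * (n - 1) / 2))⁻¹ *
      ∑ k ∈ Finset.range (n + 1), pqBern p q n k x * f x := by
    rw [← Finset.sum_mul, sum_pqBern hq hqp, inv_mul_cancel_left₀ hN.ne']
  conv_lhs => rw [pqBernsteinR_eq, hfx]
  rw [← mul_sub, ← Finset.sum_sub_distrib, abs_mul, abs_inv, abs_of_pos hN]
  gcongr
  refine (Finset.abs_sum_le_sum_abs _ _).trans (Finset.sum_le_sum fun k _ => ?_)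
  rw [← mul_sub, abs_mul, abs_of_nonneg (pqBern_nonneg hq hqp n k hx), abs_sub_comm]

theorem pq_bernsteinR_approx_general (r : ℕ) (f : ℝ → ℝ) (hf : ContDiffOn ℝ r f (Set.Icc 0 1))
    (n : ℕ) (hn : 1 ≤ n) (p q : ℝ) (hq : 0 < q) (hqp : q < p)
    (x : ℝ) (hx : x ∈ Set.Icc (0 : ℝ) 1) :
    |pqBernsteinR p q n r f x - f x| ≤
      (1 / (r.factorial : ℝ)) *
        modulusOfContinuity (iteratedDerivWithin r f (Set.Icc 0 1))
          (1 / Real.sqrt (pqInt p q n)) *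
        (Real.sqrt (pqInt p q n) * pqAbsMoment p q n (r + 1) x + pqAbsMoment p q n r x) := by
  set s := Real.sqrt (pqInt p q n)
  set ω := modulusOfContinuity (iteratedDerivWithin r f (Set.Icc 0 1)) (1 / s)
  have hs : 0 < s := Real.sqrt_pos.2 (pqInt_pos hq.le hqp hn)
  have hterm : ∀ k ∈ Finset.range (n + 1),
      pqBern p q n k x * |f x - taylorWithinEval f r (Set.Icc 0 1) (pqNode p q n k) x| ≤
        1 / r.factorial * ω * (s * (|pqNode p q n k - x| ^ (r + 1) * pqBern p q n k x) +
          |pqNode p q n k - x| ^ r * pqBern p q n k x) := by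
    intro k hk
    have hnode := pqNode_mem_Icc hq.le hqp hn (Nat.lt_succ_iff.1 (Finset.mem_range.1 hk))
    have htaylor := abs_sub_taylorWithinEval_le hf (one_div_pos.2 hs) hnode hx
    rw [abs_sub_comm x, div_div_eq_mul_div, div_one] at htaylor
    calc _ ≤ pqBern p q n k x * ((1 + |pqNode p q n k - x| * s) * ω *
          |pqNode p q n k - x| ^ r / r.factorial) :=
          mul_le_mul_of_nonneg_left htaylor (pqBern_nonneg hq.le hqp n k hx)
      _ = _ := by ring
  calc _ ≤ _ := abs_pqBernsteinR_sub_le hq.le hqp n r f hx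
    _ ≤ _ := mul_le_mul_of_nonneg_left (Finset.sum_le_sum hterm)
        (inv_pos.2 (pow_pos (hq.trans hqp) _)).le
    _ = _ := by simp only [pqAbsMoment, ← Finset.mul_sum, Finset.sum_add_distrib]; ring

/-- `|B^{[r]}_{n,p,q}(f;x) - f(x)| ≤ (1/r!) ω(f^{(r)}; [n]^{-1/2})
([n]^{1/2} B_{n,p,q}(|t-x|^{r+1};x) + B_{n,p,q}(|t-x|^r;x))`. -/
theorem pq_bernsteinR_approx (r : ℕ) (f : ℝ → ℝ) (hf : ContDiffOn ℝ r f (Set.Icc 0 1))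
    (n : ℕ) (hn : 1 ≤ n) (p q : ℝ) (hq : 0 < q) (hqp : q < p) (hp : p ≤ 1)
    (x : ℝ) (hx : x ∈ Set.Icc (0 : ℝ) 1) :
    |pqBernsteinR p q n r f x - f x| ≤
      (1 / (r.factorial : ℝ)) *
        modulusOfContinuity (iteratedDerivWithin r f (Set.Icc 0 1))
          (1 / Real.sqrt (pqInt p q n)) *
        (Real.sqrt (pqInt p q n) * pqAbsMoment p q n (r + 1) x + pqAbsMoment p q n r x) :=
  pq_bernsteinR_approx_general r f hf n hn p q hq hqp x hx
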